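/- arXiv:2506.06463 — 4 statements merged into one kernel-verified Lean document; each statement's English description precedes it below -/
import Mathlib

section
/- The number of monic polynomials of degree n over F_p with index at least k is O_n(p^{n−k}); equivalently, the fraction of monic degree-n polynomials over F_p with index ≥ k is at most C(n)·p^{−k} for a constant C(n) depending only on n. -/
open Polynomial UniqueFactorizationMonoid

/-- The index of a polynomial `f = ∏ fᵢ^{eᵢ}` over a field:
`ind f = deg f - Σᵢ deg fᵢ = Σᵢ (eᵢ - 1) deg fᵢ`, summing over the distinct monic
irreducible factors `fᵢ` of `f`. -/
noncomputable def polyIndex {K : Type*} [Field K] [DecidableEq K] (f : K[X]) : ℕ :=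
  f.natDegree - ((normalizedFactors f).toFinset.sum fun g => g.natDegree)

/-!
The index of `f` is `deg f - deg (rad f)`, so a monic `f` of degree `n` and index `≥ k` has a
monic radical `r` of degree `≤ n - k`; there are `O_n(p^{n-k})` such `r`. Since every
multiplicity of `f` is at most `n`, `f` is a monic divisor of `r ^ n`, and a polynomial of
degree `m` has at most `2 ^ m` monic divisors (they correspond to sub-multisets of its
`≤ m` irreducible factors), so each `r` accounts for at most `2 ^ (n * n)` polynomials `f`.
-/

theorem Set.encard_le_mul_of_subset_biUnion {α ι : Type*} {s : Set α} {t : Set ι}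
    {A : ι → Set α} {m : ℕ∞} (ht : t.Finite) (hst : s ⊆ ⋃ i ∈ t, A i)
    (hA : ∀ i ∈ t, (A i).encard ≤ m) : s.encard ≤ t.encard * m :=
  calc s.encard ≤ (⋃ i ∈ ht.toFinset, A i).encard := encard_le_encard (by simpa using hst)
    _ ≤ ∑ i ∈ ht.toFinset, (A i).encard := Finset.set_encard_biUnion_le _ _
    _ ≤ ht.toFinset.card • m := Finset.sum_le_card_nsmul _ _ _ (by simpa using hA)
    _ = t.encard * m := by rw [nsmul_eq_mul, ht.encard_eq_coe_toFinset_card]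

theorem UniqueFactorizationMonoid.dvd_radical_pow {M : Type*} [CommMonoidWithZero M]
    [NormalizationMonoid M] [UniqueFactorizationMonoid M] {a : M} (ha : a ≠ 0) {n : ℕ}
    (hn : Multiset.card (normalizedFactors a) ≤ n) : a ∣ radical a ^ n := by
  have : Nontrivial M := ⟨⟨a, 0, ha⟩⟩
  classical
  rw [dvd_iff_normalizedFactors_le_normalizedFactors ha (pow_ne_zero _ radical_ne_zero),
    normalizedFactors_pow]
  refine (Multiset.le_card_smul_iff_subset.mpr fun q hq => ?_).trans
    (nsmul_le_nsmul_left (Multiset.zero_le _) hn)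
  rwa [← mem_primeFactors, primeFactors_radical, mem_primeFactors]

namespace Polynomial

theorem encard_monic_natDegree_le (R : Type*) [Semiring R] [Fintype R] (d : ℕ) :
    {g : R[X] | g.Monic ∧ g.natDegree ≤ d}.encard ≤ (d + 1) * Fintype.card R ^ d := by
  calc {g : R[X] | g.Monic ∧ g.natDegree ≤ d}.encard
      ≤ (Set.univ : Set (Fin (d + 1) × (Fin d → R))).encard := by
        refine Set.encard_le_encard_of_injOn
          (f := fun g => (Fin.ofNat (d + 1) g.natDegree, fun i : Fin d => g.coeff i))
          (Set.mapsTo_univ _ _) ?_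
        rintro g ⟨hg, hgd⟩ g' ⟨hg', hgd'⟩ h
        simp only [Prod.mk.injEq, Fin.ext_iff, Fin.val_ofNat, funext_iff,
          Nat.mod_eq_of_lt (Nat.lt_succ_of_le hgd), Nat.mod_eq_of_lt (Nat.lt_succ_of_le hgd')] at h
        obtain ⟨hdeg, hcoeff⟩ := h
        ext i
        rcases lt_trichotomy i g.natDegree with hi | rfl | hi
        · exact hcoeff ⟨i, hi.trans_le hgd⟩
        · rw [hg.coeff_natDegree, hdeg, hg'.coeff_natDegree]
        · rw [coeff_eq_zero_of_natDegree_lt hi, coeff_eq_zero_of_natDegree_lt (hdeg ▸ hi)]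
    _ = (d + 1) * Fintype.card R ^ d := by
        simp [Set.encard_univ, ENat.card_eq_coe_fintype_card]

variable {K : Type*} [Field K] [DecidableEq K]

theorem card_normalizedFactors_le_natDegree (f : K[X]) :
    Multiset.card (normalizedFactors f) ≤ f.natDegree := by
  rcases eq_or_ne f 0 with rfl | hf
  · simp
  have hdeg : f.natDegree = ((normalizedFactors f).map natDegree).sum := by
    rw [← natDegree_multiset_prod _ (zero_notMem_normalizedFactors f),
      prod_normalizedFactors_eq hf, natDegree_eq_of_degree_eq degree_normalize]
  have hpos : ∀ d ∈ (normalizedFactors f).map natDegree, 1 ≤ d := by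
    simp only [Multiset.mem_map]
    rintro _ ⟨q, hq, rfl⟩
    exact (irreducible_of_normalized_factor q hq).natDegree_pos
  simpa [hdeg] using Multiset.card_nsmul_le_sum hpos

theorem monic_radical (f : K[X]) : (radical f).Monic :=
  monic_prod_of_monic _ _ fun q hq => by
    have hq := mem_primeFactors.mp hq
    rw [← normalize_normalized_factor q hq]
    exact monic_normalize (prime_of_normalized_factor q hq).ne_zero

theorem natDegree_radical (f : K[X]) :
    (radical f).natDegree = ∑ g ∈ (normalizedFactors f).toFinset, g.natDegree := by
  rw [radical, toFinset_normalizedFactors]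
  exact natDegree_prod _ _ fun q hq =>
    (prime_of_normalized_factor q (mem_primeFactors.mp hq)).ne_zero

theorem polyIndex_eq_natDegree_sub_natDegree_radical (f : K[X]) :
    polyIndex f = f.natDegree - (radical f).natDegree := by
  rw [polyIndex, natDegree_radical]

theorem natDegree_radical_le_sub_of_le_polyIndex {f : K[X]} (hf : f ≠ 0) {k : ℕ}
    (hk : k ≤ polyIndex f) : (radical f).natDegree ≤ f.natDegree - k := by
  have := natDegree_le_of_dvd radical_dvd_self hf
  rw [polyIndex_eq_natDegree_sub_natDegree_radical] at hk
  omega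

theorem dvd_radical_pow_natDegree {f : K[X]} (hf : f ≠ 0) : f ∣ radical f ^ f.natDegree :=
  dvd_radical_pow hf (card_normalizedFactors_le_natDegree f)

theorem encard_monic_dvd_le {g : K[X]} (hg : g ≠ 0) :
    {f : K[X] | f.Monic ∧ f ∣ g}.encard ≤ 2 ^ g.natDegree := by
  calc {f : K[X] | f.Monic ∧ f ∣ g}.encard
      ≤ ((normalizedFactors g).powerset.toFinset : Set (Multiset K[X])).encard := by
        refine Set.encard_le_encard_of_injOn (f := normalizedFactors) ?_ ?_
        · rintro f ⟨hf, hfg⟩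
          simpa using (dvd_iff_normalizedFactors_le_normalizedFactors hf.ne_zero hg).mp hfg
        · rintro f ⟨hf, -⟩ f' ⟨hf', -⟩ h
          rw [← hf.normalize_eq_self, ← hf'.normalize_eq_self,
            ← prod_normalizedFactors_eq hf.ne_zero, ← prod_normalizedFactors_eq hf'.ne_zero, h]
    _ ≤ 2 ^ g.natDegree := by
        rw [Set.encard_coe_eq_coe_finsetCard]
        have hcard := (Multiset.toFinset_card_le (normalizedFactors g).powerset).trans_eq
          (Multiset.card_powerset _)
        exact_mod_cast hcard.trans (Nat.pow_le_pow_right two_pos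
          (card_normalizedFactors_le_natDegree g))

end Polynomial

/-- The number of monic polynomials of degree `n` over `F_p` with index at least `k`
is `O_n(p^{n-k})`: at most `C(n) · p^{n-k}` for a constant `C(n)` depending only on `n`. -/
theorem stmt5 (n : ℕ) : ∃ C : ℕ, 0 < C ∧ ∀ (p : ℕ) [Fact p.Prime] (k : ℕ),
    Nat.card {f : (ZMod p)[X] | f.Monic ∧ f.natDegree = n ∧ k ≤ polyIndex f} ≤
      C * p ^ (n - k) := by
  refine ⟨(n + 1) * 2 ^ (n * n), by positivity, fun p _ k => ?_⟩
  set R := {r : (ZMod p)[X] | r.Monic ∧ r.natDegree ≤ n - k}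
  have hR : R.encard ≤ ((n + 1) * p ^ (n - k) : ℕ) := by
    refine (encard_monic_natDegree_le (ZMod p) (n - k)).trans ?_
    rw [ZMod.card]
    exact_mod_cast Nat.mul_le_mul_right _ (by omega)
  have hcover : {f : (ZMod p)[X] | f.Monic ∧ f.natDegree = n ∧ k ≤ polyIndex f} ⊆
      ⋃ r ∈ R, {f | f.Monic ∧ f ∣ r ^ n} := by
    rintro f ⟨hf, rfl, hk⟩
    exact Set.mem_biUnion
      ⟨monic_radical f, natDegree_radical_le_sub_of_le_polyIndex hf.ne_zero hk⟩
      ⟨hf, dvd_radical_pow_natDegree hf.ne_zero⟩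
  have hfibre :
      ∀ r ∈ R, {f | f.Monic ∧ f ∣ r ^ n}.encard ≤ ((2 ^ (n * n) : ℕ) : ℕ∞) := by
    rintro r ⟨hr, hrd⟩
    refine (encard_monic_dvd_le (hr.pow n).ne_zero).trans ?_
    rw [hr.natDegree_pow]
    exact_mod_cast Nat.pow_le_pow_right two_pos (Nat.mul_le_mul_left n (hrd.trans (n.sub_le k)))
  have hS := Set.encard_le_mul_of_subset_biUnion (Set.finite_of_encard_le_coe hR) hcover hfibre
  rw [Nat.card_coe_set_eq, mul_right_comm]
  refine (Set.encard_le_coe_iff_finite_ncard_le.mp (hS.trans ?_)).2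
  exact_mod_cast mul_le_mul_left hR _
end

section
/- The number of integer n×n matrices A with all entries bounded in absolute value by T that have at least one integer eigenvalue is at least c·T^{n²−n+1} for some constant c > 0 depending only on n (for all sufficiently large T). -/
open Polynomial

/-- The number of integer `n × n` matrices with all entries bounded in absolute value by
`T` that have at least one integer eigenvalue is at least `c · T^{n²-n+1}` for some
constant `c > 0` depending only on `n`, for all sufficiently large `T`. -/
theorem stmt9 (n : ℕ) (hn : 0 < n) :
    ∃ c : ℝ, 0 < c ∧ ∃ T₀ : ℕ, ∀ T : ℕ, T₀ ≤ T →
      c * (T : ℝ) ^ (n ^ 2 - n + 1) ≤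
        (Nat.card {A : Matrix (Fin n) (Fin n) ℤ |
          (∀ i j, |A i j| ≤ (T : ℤ)) ∧ ∃ lam : ℤ, A.charpoly.eval lam = 0} : ℝ) := by
  refine ⟨1, one_pos, 1, fun T hT => ?_⟩
  set i₀ : Fin n := ⟨n - 1, by omega⟩ with hi₀
  set S := {A : Matrix (Fin n) (Fin n) ℤ |
      (∀ i j, |A i j| ≤ (T : ℤ)) ∧ ∃ lam : ℤ, A.charpoly.eval lam = 0} with hS
  -- S is finite
  have hfin : S.Finite := by
    have hpi : (Set.pi (Set.univ : Set (Fin n)) fun _ =>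
        Set.pi (Set.univ : Set (Fin n)) fun _ => Set.Icc (-(T:ℤ)) (T:ℤ)).Finite :=
      Set.Finite.pi fun _ => Set.Finite.pi fun _ => Set.finite_Icc _ _
    refine hpi.subset ?_
    intro A hA i _ j _
    have h := hA.1 i j
    rw [abs_le] at h
    exact ⟨h.1, h.2⟩
  haveI := hfin.to_subtype
  -- the injection
  let F := (Fin n → {j : Fin n // j ≠ i₀} → Fin (T + 1)) × Fin (T + 1)
  let f : F → Matrix (Fin n) (Fin n) ℤ := fun p => Matrix.of fun i j =>
    if h : j = i₀ then (if i = i₀ then ((p.2 : ℕ) : ℤ) else 0)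
    else ((p.1 i ⟨j, h⟩ : ℕ) : ℤ)
  have hmem : ∀ p : F, f p ∈ S := by
    intro p
    constructor
    · intro i j
      simp only [f, Matrix.of_apply]
      split_ifs with h1 h2
      · rw [abs_le]
        have := (p.2).isLt
        omega
      · simp
      · rw [abs_le]
        have := (p.1 i ⟨j, h1⟩).isLt
        omega
    · refine ⟨((p.2 : ℕ) : ℤ), ?_⟩
      have hdet : (f p).charpoly.eval ((p.2 : ℕ) : ℤ) =
          (((evalRingHom ((p.2 : ℕ) : ℤ)).mapMatrix (Matrix.charmatrix (f p)))).det := by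
        rw [Matrix.charpoly, ← RingHom.map_det]
        rfl
      rw [hdet]
      apply Matrix.det_eq_zero_of_column_eq_zero i₀
      intro i
      by_cases hi : i = i₀
      · subst hi
        simp [Matrix.charmatrix_apply_eq, f]
      · rw [RingHom.mapMatrix_apply, Matrix.map_apply, Matrix.charmatrix_apply_ne _ _ _ hi]
        simp [f, hi]
  have hinj : Function.Injective f := by
    intro p q hpq
    have hentry : ∀ i j, f p i j = f q i j := fun i j => by rw [hpq]
    have h2 : p.2 = q.2 := by
      have := hentry i₀ i₀
      simp only [f, Matrix.of_apply, dif_pos rfl, if_pos rfl] at this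
      norm_num at this
      exact Fin.ext (by exact_mod_cast this)
    have h1 : p.1 = q.1 := by
      funext i j
      have := hentry i j.1
      simp only [f, Matrix.of_apply] at this
      rw [dif_neg j.2, dif_neg j.2] at this
      exact Fin.ext (by exact_mod_cast this)
    exact Prod.ext h1 h2
  have hcard : Nat.card F ≤ Nat.card S := by
    exact Nat.card_le_card_of_injective (fun p => (⟨f p, hmem p⟩ : S))
      (fun p q h => hinj (congrArg Subtype.val h))
  have hcardF : Nat.card F = (T + 1) ^ ((n - 1) * n + 1) := by
    simp only [F, Nat.card_eq_fintype_card, Fintype.card_prod, Fintype.card_fun,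
      Fintype.card_fin]
    have hsub : Fintype.card {j : Fin n // j ≠ i₀} = n - 1 := by
      rw [Fintype.card_subtype_compl, Fintype.card_subtype_eq, Fintype.card_fin]
    rw [hsub, ← pow_mul, ← pow_succ]
  have hexp : n ^ 2 - n + 1 = (n - 1) * n + 1 := by
    obtain ⟨m, rfl⟩ : ∃ m, n = m + 1 := ⟨n - 1, by omega⟩
    have h1 : (m + 1) ^ 2 = m * (m + 1) + (m + 1) := by ring
    rw [h1, Nat.add_sub_cancel]
    simp
  have hnat : T ^ (n ^ 2 - n + 1) ≤ Nat.card S := by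
    calc T ^ (n ^ 2 - n + 1) ≤ (T + 1) ^ (n ^ 2 - n + 1) :=
          Nat.pow_le_pow_left (Nat.le_succ T) _
      _ = Nat.card F := by rw [hcardF, hexp]
      _ ≤ Nat.card S := hcard
  rw [one_mul]
  calc (T : ℝ) ^ (n ^ 2 - n + 1) = ((T ^ (n ^ 2 - n + 1) : ℕ) : ℝ) := by push_cast; ring
    _ ≤ (Nat.card S : ℝ) := by exact_mod_cast hnat
end

section
/- For any matrix A ∈ Mat_n(ℤ) and S = Diag(1,…,n), the polynomial t ↦ disc_x det(xI − tS − A) has degree n² − n in t with leading coefficient equal to disc(χ_S) = ∏_{1 ≤ i < j ≤ n} (j − i)², which is nonzero; hence for each prime p > n this polynomial in t is not identically zero modulo p. -/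
/-!
Since `Res(χ_B, g) = det g(B)`, the discriminant of the characteristic polynomial `χ_B` is
`± det χ_B'(B)`; over an algebraically closed field both are `± ∏ χ_B'(λ)` over the eigenvalues.
The determinant form makes sense over any commutative ring, commutes with ring maps, and is
homogeneous of degree `n(n-1)` in `B`, since `χ_{cB}` is `χ_B` with its roots scaled by `c`.
Over the Laurent polynomials this gives `disc(T•S + A) = Tⁿ⁽ⁿ⁻¹⁾ disc(S + T⁻¹•A)`, so
`disc(tS + A)` has degree at most `n(n-1)` in `t`, with top coefficient
`disc S = ∏_{i<j} (j - i)²`, which is a unit modulo every prime `p > n`.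
-/

open Polynomial

/-- The discriminant of a monic polynomial `f` over a field `K`, computed in an algebraic
closure as `(-1)^{n(n-1)/2} ∏ᵢ f'(rᵢ)` over the roots `rᵢ` of `f`. -/
noncomputable def polyDisc (K : Type*) [Field K] (f : K[X]) : AlgebraicClosure K :=
  (-1) ^ (f.natDegree * (f.natDegree - 1) / 2) *
    ((f.aroots (AlgebraicClosure K)).map
      (fun r => (derivative (f.map (algebraMap K (AlgebraicClosure K)))).eval r)).prod

namespace Finset

variable {ι : Type*} [Fintype ι] [LinearOrder ι] [DecidableEq ι]

lemma prod_prod_erase_eq_prod_filter_lt {M : Type*} [CommMonoid M] (f : ι → ι → M) :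
    ∏ i, ∏ j ∈ univ.erase i, f i j =
      ∏ q ∈ univ.filter (fun q : ι × ι => q.1 < q.2), f q.1 q.2 * f q.2 q.1 := by
  have hne : ∏ i, ∏ j ∈ univ.erase i, f i j =
      ∏ q ∈ univ.filter (fun q : ι × ι => q.1 ≠ q.2), f q.1 q.2 := by
    rw [prod_filter, Fintype.prod_prod_type]
    refine prod_congr rfl fun i _ => ?_
    rw [← filter_ne', prod_filter]
    simp_rw [ne_comm]
  have hsplit : univ.filter (fun q : ι × ι => q.1 ≠ q.2) =
      univ.filter (fun q : ι × ι => q.1 < q.2) ∪ univ.filter (fun q : ι × ι => q.2 < q.1) := by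
    ext q
    simp [lt_or_lt_iff_ne]
  have hswap : ∏ q ∈ univ.filter (fun q : ι × ι => q.2 < q.1), f q.1 q.2 =
      ∏ q ∈ univ.filter (fun q : ι × ι => q.1 < q.2), f q.2 q.1 :=
    prod_nbij' Prod.swap Prod.swap (by simp) (by simp) (by simp) (by simp) (by simp)
  rw [hne, hsplit, prod_union (disjoint_filter.mpr fun q _ h h' => lt_asymm h h'), hswap,
    prod_mul_distrib]

lemma prod_prod_erase_sub {R : Type*} [CommRing R] (v : ι → R) :
    ∏ i, ∏ j ∈ univ.erase i, (v i - v j) =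
      (-1) ^ (Fintype.card ι).choose 2 *
        ∏ q ∈ univ.filter (fun q : ι × ι => q.1 < q.2), (v q.2 - v q.1) ^ 2 := by
  rw [prod_prod_erase_eq_prod_filter_lt, ← Fintype.card_product_filter_lt, ← prod_const,
    ← prod_mul_distrib]
  exact prod_congr rfl fun q _ => by ring

end Finset

namespace Polynomial

variable {R : Type*} [CommSemiring R]

lemma coeff_comp_C_mul_X (p : R[X]) (c : R) (k : ℕ) :
    (p.comp (C c * X)).coeff k = c ^ k * p.coeff k := by
  induction p using Polynomial.induction_on' with
  | add p q hp hq => simp [add_comp, hp, hq, mul_add]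
  | monomial n a =>
    rw [monomial_comp, mul_pow, ← C_pow, ← mul_assoc, ← C_mul, coeff_C_mul_X_pow, coeff_monomial]
    split_ifs <;> simp_all [mul_comm]

lemma aeval_smul_derivative_scaleRoots {A : Type*} [Semiring A] [Algebra R A] (p : R[X]) (c : R)
    (x : A) :
    aeval (c • x) (derivative (p.scaleRoots c)) =
      c ^ (p.natDegree - 1) • aeval x (derivative p) := by
  have hlt (q : R[X]) (hq : q.natDegree = p.natDegree) :
      (derivative q).natDegree < p.natDegree + 1 :=
    (natDegree_derivative_le q).trans_lt (by omega)
  rw [aeval_eq_sum_range' (hlt _ (natDegree_scaleRoots p c)), aeval_eq_sum_range' (hlt p rfl),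
    Finset.smul_sum]
  refine Finset.sum_congr rfl fun i _ => ?_
  rw [coeff_derivative, coeff_derivative, coeff_scaleRoots, _root_.smul_pow, smul_smul, smul_smul]
  rcases le_or_gt (i + 1) p.natDegree with hi | hi
  · congr 1
    rw [show p.natDegree - 1 = (p.natDegree - (i + 1)) + i by omega, pow_add]
    ring
  · simp [coeff_eq_zero_of_natDegree_lt hi]

open LaurentPolynomial

lemma coeff_toLaurent_natCast (p : R[X]) (k : ℕ) : (toLaurent p).coeff (k : ℤ) = p.coeff k := by
  rw [coeff_toLaurent]
  exact Finsupp.mapDomain_apply Nat.castEmbedding.injective _ k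

lemma coeff_toLaurent_of_neg (p : R[X]) {m : ℤ} (hm : m < 0) : (toLaurent p).coeff m = 0 := by
  rw [coeff_toLaurent]
  exact Finsupp.mapDomain_of_notMem_range _ _ (by rintro ⟨k, rfl⟩; simp at hm; omega)

section ReflectedLaurent

variable {p q : R[X]} {d : ℕ}

lemma coeff_toLaurent_eq_of_eq_T_mul_invert (h : toLaurent p = T d * invert (toLaurent q))
    (m : ℤ) :
    (toLaurent p).coeff m = (toLaurent q).coeff (d - m) := by
  rw [h, T, AddMonoidAlgebra.coeff_single_mul_apply, invert_apply, one_mul]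
  congr 1
  ring

lemma natDegree_le_of_toLaurent_eq_T_mul_invert (h : toLaurent p = T d * invert (toLaurent q)) :
    p.natDegree ≤ d := by
  refine natDegree_le_iff_coeff_eq_zero.mpr fun k hk => ?_
  rw [← coeff_toLaurent_natCast, coeff_toLaurent_eq_of_eq_T_mul_invert h,
    coeff_toLaurent_of_neg _ (by omega)]

lemma coeff_eq_coeff_zero_of_toLaurent_eq_T_mul_invert
    (h : toLaurent p = T d * invert (toLaurent q)) : p.coeff d = q.coeff 0 := by
  rw [← coeff_toLaurent_natCast, coeff_toLaurent_eq_of_eq_T_mul_invert h, sub_self,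
    ← Nat.cast_zero, coeff_toLaurent_natCast]

end ReflectedLaurent

end Polynomial

namespace Matrix

variable {ι R S : Type*} [Fintype ι] [DecidableEq ι] [CommRing R] [CommRing S]

lemma charpolyRev_smul (c : R) (B : Matrix ι ι R) :
    (c • B).charpolyRev = B.charpolyRev.comp (C c * X) := by
  rw [charpolyRev, charpolyRev, ← coe_compRingHom_apply, RingHom.map_det, RingHom.mapMatrix_apply]
  congr 1
  ext i j : 1
  by_cases h : i = j <;> simp [h, C_mul] <;> ring

lemma charpoly_smul (c : R) (B : Matrix ι ι R) :
    (c • B).charpoly = B.charpoly.scaleRoots c := by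
  nontriviality R
  ext k
  rw [coeff_scaleRoots, charpoly_natDegree_eq_dim]
  rcases le_or_gt k (Fintype.card ι) with hk | hk
  · have hrev (M : Matrix ι ι R) :
        M.charpoly.coeff k = M.charpolyRev.coeff (Fintype.card ι - k) := by
      rw [← reverse_charpoly, coeff_reverse, charpoly_natDegree_eq_dim, revAt_le (Nat.sub_le _ _),
        Nat.sub_sub_self hk]
    rw [hrev, hrev, charpolyRev_smul, coeff_comp_C_mul_X, mul_comm]
  · rw [coeff_eq_zero_of_natDegree_lt, coeff_eq_zero_of_natDegree_lt, zero_mul] <;>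
      rwa [charpoly_natDegree_eq_dim]

lemma aeval_diagonal (v : ι → R) (p : R[X]) :
    aeval (diagonal v) p = diagonal fun i => p.eval (v i) := by
  rw [← diagonalAlgHom_apply (R := R), aeval_algHom_apply, aeval_pi_apply]
  rfl

section AlgClosed

variable {K : Type*} [Field K] [IsAlgClosed K]

lemma card_roots_charpoly (B : Matrix ι ι K) : B.charpoly.roots.card = Fintype.card ι := by
  rw [← (IsAlgClosed.splits B.charpoly).natDegree_eq_card_roots, charpoly_natDegree_eq_dim]

lemma det_sub_scalar_eq_prod_roots (B : Matrix ι ι K) (μ : K) :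
    (B - scalar ι μ).det = (B.charpoly.roots.map (· - μ)).prod := by
  rw [← neg_sub, det_neg, ← eval_charpoly,
    (IsAlgClosed.splits B.charpoly).eval_eq_prod_roots_of_monic (charpoly_monic B),
    ← card_roots_charpoly B, ← Multiset.card_map (μ - ·), ← Multiset.prod_map_neg,
    Multiset.map_map]
  simp

lemma det_aeval_eq_prod_roots (B : Matrix ι ι K) (g : K[X]) :
    (aeval B g).det = (B.charpoly.roots.map g.eval).prod := by
  let detAeval : K[X] →* K := detMonoidHom.comp (aeval B).toMonoidHom
  have hg := IsAlgClosed.splits g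
  calc (aeval B g).det = detAeval g := rfl
    _ = g.leadingCoeff ^ Fintype.card ι *
          (g.roots.map fun μ => (B.charpoly.roots.map (· - μ)).prod).prod := by
        conv_lhs => rw [hg.eq_prod_roots]
        rw [map_mul, map_multiset_prod, Multiset.map_map]
        congr 1
        · simp [detAeval, algebraMap_eq_diagonal, Pi.algebraMap_def]
        · refine congrArg _ (Multiset.map_congr rfl fun μ _ => ?_)
          simp [detAeval, ← det_sub_scalar_eq_prod_roots, algebraMap_eq_diagonal, scalar_apply,
            Pi.algebraMap_def]
    _ = (B.charpoly.roots.map g.eval).prod := by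
        simp_rw [hg.eval_eq_prod_roots, Multiset.prod_map_mul, Multiset.map_const',
          Multiset.prod_replicate, card_roots_charpoly]
        rw [Multiset.prod_map_prod_map]

end AlgClosed

/-- The discriminant of `B.charpoly`; unlike `Matrix.discr`, it is defined through `det χ_B'(B)`. -/
noncomputable def charpolyDiscr (B : Matrix ι ι R) : R :=
  (-1) ^ (Fintype.card ι * (Fintype.card ι - 1) / 2) * (aeval B (derivative B.charpoly)).det

lemma charpolyDiscr_map (f : R →+* S) (B : Matrix ι ι R) :
    f B.charpolyDiscr = (B.map f).charpolyDiscr := by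
  have hf : (algebraMap S (Matrix ι ι S)).comp f = f.mapMatrix.comp (algebraMap R _) := by
    ext r : 1
    simp [algebraMap_eq_diagonal, Pi.algebraMap_def]
  rw [charpolyDiscr, charpolyDiscr, map_mul, map_pow, map_neg, map_one, RingHom.map_det,
    map_aeval_eq_aeval_map hf, RingHom.mapMatrix_apply, ← derivative_map, charpoly_map]

lemma charpolyDiscr_smul (c : R) (B : Matrix ι ι R) :
    (c • B).charpolyDiscr = c ^ (Fintype.card ι * (Fintype.card ι - 1)) * B.charpolyDiscr := by
  nontriviality R
  rw [charpolyDiscr, charpolyDiscr, charpoly_smul, aeval_smul_derivative_scaleRoots,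
    charpoly_natDegree_eq_dim, det_smul, ← pow_mul, mul_comm (Fintype.card ι - 1)]
  ring

lemma charpolyDiscr_diagonal [LinearOrder ι] (v : ι → R) :
    (diagonal v).charpolyDiscr =
      ∏ q ∈ Finset.univ.filter (fun q : ι × ι => q.1 < q.2), (v q.2 - v q.1) ^ 2 := by
  have hnode (i : ι) : (derivative (∏ j, (X - C (v j)))).eval (v i) =
      ∏ j ∈ Finset.univ.erase i, (v i - v j) := by
    simpa [Lagrange.nodal, eval_prod] using
      Lagrange.eval_nodal_derivative_eval_node_eq (s := Finset.univ) (v := v) (Finset.mem_univ i)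
  rw [charpolyDiscr, charpoly_diagonal, aeval_diagonal, det_diagonal]
  simp_rw [hnode]
  rw [Finset.prod_prod_erase_sub, Nat.choose_two_right, ← mul_assoc, ← pow_add, ← two_mul,
    pow_mul, neg_one_sq, one_pow, one_mul]

lemma polyDisc_charpoly {K : Type*} [Field K] (B : Matrix ι ι K) :
    polyDisc K B.charpoly = algebraMap K (AlgebraicClosure K) B.charpolyDiscr := by
  rw [charpolyDiscr_map, charpolyDiscr, polyDisc, charpoly_natDegree_eq_dim, aroots_def,
    ← charpoly_map, det_aeval_eq_prod_roots]

open LaurentPolynomial hiding C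

lemma toLaurent_charpolyDiscr (P Q : Matrix ι ι R) :
    toLaurent ((X : R[X]) • P.map C + Q.map C).charpolyDiscr =
      T (Fintype.card ι * (Fintype.card ι - 1) : ℕ) *
        invert (toLaurent (P.map C + (X : R[X]) • Q.map C).charpolyDiscr) := by
  let M : Matrix ι ι (LaurentPolynomial R) :=
    P.map LaurentPolynomial.C + (T (-1) : LaurentPolynomial R) • Q.map LaurentPolynomial.C
  have hinv : invert (toLaurent (P.map C + (X : R[X]) • Q.map C).charpolyDiscr) =
      M.charpolyDiscr := by
    change (invert.toRingHom.comp toLaurent) _ = _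
    rw [charpolyDiscr_map]
    congr 1
    ext i j : 1
    simp [M]
  have hlaurent : ((X : R[X]) • P.map C + Q.map C).map (toLaurent : R[X] →+* LaurentPolynomial R) =
      (T 1 : LaurentPolynomial R) • M := by
    ext i j : 1
    simp only [M, map_apply, add_apply, smul_apply, smul_eq_mul, map_add, map_mul, toLaurent_X,
      toLaurent_C]
    rw [mul_add, ← mul_assoc, ← T_add, add_neg_cancel, T_zero, one_mul]
  rw [charpolyDiscr_map, hlaurent, charpolyDiscr_smul, hinv, T_pow, mul_one]

lemma natDegree_charpolyDiscr_X_smul_add_le (P Q : Matrix ι ι R) :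
    ((X : R[X]) • P.map C + Q.map C).charpolyDiscr.natDegree ≤
      Fintype.card ι * (Fintype.card ι - 1) :=
  natDegree_le_of_toLaurent_eq_T_mul_invert (toLaurent_charpolyDiscr P Q)

lemma coeff_charpolyDiscr_X_smul_add (P Q : Matrix ι ι R) :
    ((X : R[X]) • P.map C + Q.map C).charpolyDiscr.coeff (Fintype.card ι * (Fintype.card ι - 1)) =
      P.charpolyDiscr := by
  rw [coeff_eq_coeff_zero_of_toLaurent_eq_T_mul_invert (toLaurent_charpolyDiscr P Q),
    coeff_zero_eq_eval_zero, ← coe_evalRingHom, charpolyDiscr_map]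
  congr 1
  ext i j : 1
  simp

lemma eval_charpolyDiscr_X_smul_add (P Q : Matrix ι ι R) (t : R) :
    ((X : R[X]) • P.map C + Q.map C).charpolyDiscr.eval t = (t • P + Q).charpolyDiscr := by
  rw [← coe_evalRingHom, charpolyDiscr_map]
  congr 1
  ext i j : 1
  simp [mul_comm _ t]

end Matrix

lemma prod_natCast_sub_sq_ne_zero {R : Type*} [CommRing R] [IsDomain R] {n : ℕ}
    (h : ∀ k : ℕ, 0 < k → k < n → (k : R) ≠ 0) :
    ∏ q ∈ Finset.univ.filter (fun q : Fin n × Fin n => q.1 < q.2),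
      (((q.2 : ℕ) : R) - ((q.1 : ℕ) : R)) ^ 2 ≠ 0 := by
  refine Finset.prod_ne_zero_iff.mpr fun q hq => pow_ne_zero 2 ?_
  have hlt : (q.1 : ℕ) < q.2 := (Finset.mem_filter.mp hq).2
  rw [← Nat.cast_sub hlt.le]
  exact h _ (by omega) (by omega)

/-- For `A ∈ Mat_n(ℤ)` and `S = Diag(1,…,n)`, the polynomial
`t ↦ disc_x det(xI - tS - A)` has degree `n² - n` in `t` with leading coefficient
`disc χ_S = ∏_{i<j} (j-i)² ≠ 0`; hence for each prime `p > n` it is not identically zero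
modulo `p`. -/
theorem stmt13 (n : ℕ) (A : Matrix (Fin n) (Fin n) ℤ) :
    ∃ D : ℤ[X],
      (∀ t : ℤ, ((D.eval t : ℤ) : AlgebraicClosure ℚ) =
        polyDisc ℚ ((t • Matrix.diagonal (fun i : Fin n => ((i : ℕ) + 1 : ℤ)) + A).map
          (Int.cast : ℤ → ℚ)).charpoly) ∧
      D.natDegree = n ^ 2 - n ∧
      D.leadingCoeff =
        ∏ q ∈ Finset.univ.filter (fun q : Fin n × Fin n => q.1 < q.2),
          ((q.2 : ℤ) - (q.1 : ℤ)) ^ 2 ∧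
      D.leadingCoeff ≠ 0 ∧
      ∀ p : ℕ, p.Prime → n < p → D.map (Int.castRingHom (ZMod p)) ≠ 0 := by
  set S := Matrix.diagonal (fun i : Fin n => ((i : ℕ) + 1 : ℤ))
  set P : ℤ := ∏ q ∈ Finset.univ.filter (fun q : Fin n × Fin n => q.1 < q.2),
    ((q.2 : ℤ) - (q.1 : ℤ)) ^ 2
  set D := ((X : ℤ[X]) • S.map C + A.map C).charpolyDiscr
  have htop : D.coeff (n * (n - 1)) = P := by
    rw [← Fintype.card_fin n, Matrix.coeff_charpolyDiscr_X_smul_add,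
      Matrix.charpolyDiscr_diagonal]
    exact Finset.prod_congr rfl fun q _ => by ring
  have hne : D.coeff (n * (n - 1)) ≠ 0 :=
    htop ▸ prod_natCast_sub_sq_ne_zero fun k hk _ => Nat.cast_ne_zero.mpr hk.ne'
  have hdeg : D.natDegree = n * (n - 1) :=
    le_antisymm (by simpa using Matrix.natDegree_charpolyDiscr_X_smul_add_le S A)
      (le_natDegree_of_ne_zero hne)
  have hlead : D.leadingCoeff = P := by rw [leadingCoeff, hdeg, htop]
  refine ⟨D, fun t => ?_, hdeg.trans (by rw [sq, Nat.mul_sub_one]), hlead, hlead ▸ htop ▸ hne,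
    fun p hp hnp hD => ?_⟩
  · rw [Matrix.polyDisc_charpoly, Matrix.eval_charpolyDiscr_X_smul_add,
      ← map_intCast (algebraMap ℚ (AlgebraicClosure ℚ)), ← eq_intCast (Int.castRingHom ℚ),
      Matrix.charpolyDiscr_map]
    rfl
  · have := Fact.mk hp
    have hmod := congrArg (coeff · (n * (n - 1))) hD
    simp only [coeff_map, htop, coeff_zero] at hmod
    refine prod_natCast_sub_sq_ne_zero (R := ZMod p) (fun k hk hkn => ?_) (by simpa [P] using hmod)
    rw [Ne, ZMod.natCast_eq_zero_iff]
    exact fun hdvd => absurd (Nat.le_of_dvd hk hdvd) (by omega)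
end

section
/- The number of integer n×n matrices of rank exactly r (over F_p, i.e., rank r mod p) with all entries bounded in absolute value by N is O_n(N^{2rn − r²}), because such a matrix is determined by the choice of an r×r invertible-mod-p submatrix together with all entries in those r rows and r columns. -/
/-!
A rank-`r` matrix `A` over a field has a CUR decomposition: for suitable `r` rows `R` and `r`
columns `C` the minor `A_{RC}` is invertible and `A = A_{·C} A_{RC}⁻¹ A_{R·}`. So `A` is determined
by `R`, `C` and its entries in those rows and columns, of which there are at most
`n² - (n - r)² = 2rn - r²`. For an integer matrix `B` with `|B_ij| ≤ N < p`, each entry is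
determined by its residue mod `p` and its sign. Applied to the reduction of `B` mod `p`, this bounds
the number of such `B` of rank `r` mod `p` by `n^{2r} · (2N + 1)^{2rn - r²} · 2^{n²}`.
-/

open Matrix Module Submodule

theorem Int.eq_of_intCast_eq_of_abs_le {p N : ℕ} (hNp : N < p) {x y : ℤ} (hx : |x| ≤ N)
    (hy : |y| ≤ N) (hxy : (x : ZMod p) = y) (hsign : 0 ≤ x ↔ 0 ≤ y) : x = y := by
  have hdvd : (p : ℤ) ∣ x - y := (ZMod.intCast_eq_intCast_iff_dvd_sub y x p).1 hxy.symm
  have hlt : |x - y| < p := by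
    rw [abs_le] at hx hy
    rw [abs_lt]
    omega
  exact sub_eq_zero.1 (Int.eq_zero_of_abs_lt_dvd hdvd hlt)

theorem Matrix.finite_setOf_abs_le {m n : Type*} [Finite m] [Finite n] (N : ℤ) :
    {B : Matrix m n ℤ | ∀ i j, |B i j| ≤ N}.Finite := by
  refine (Set.Finite.pi fun _ => Set.Finite.pi fun _ => Set.finite_Icc (-N) N).subset ?_
  intro B hB i _ j _
  exact abs_le.1 (hB i j)

theorem exists_fin_linearIndependent_of_finrank_span_eq {K V ι : Type*} [DivisionRing K]
    [AddCommGroup V] [Module K V] [Finite ι] (v : ι → V) {r : ℕ}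
    (hr : finrank K (span K (Set.range v)) = r) :
    ∃ a : Fin r → ι, span K (Set.range (v ∘ a)) = span K (Set.range v) ∧
      LinearIndependent K (v ∘ a) := by
  obtain ⟨κ, a, ha, hspan, hli⟩ := exists_linearIndependent' K v
  have : Fintype κ := have := Finite.of_injective a ha; Fintype.ofFinite κ
  have hcard : Fintype.card κ = r := by rw [← hr, ← hspan, finrank_span_eq_card hli]
  let e : Fin r ≃ κ := (Fintype.equivFinOfCardEq hcard).symm
  refine ⟨a ∘ e, ?_, hli.comp e e.injective⟩
  rw [← hspan, ← Function.comp_assoc, EquivLike.range_comp]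

section

variable {m n : Type*} {r : ℕ}

/-- `A = C U R`, where `C = A_{·C}` and `R = A_{R·}` are the chosen columns and rows of `A` and
`U = A_{RC}⁻¹`. -/
def Matrix.IsCUR {K : Type*} [CommRing K] (A : Matrix m n K) (R : Fin r → m) (C : Fin r → n) :
    Prop :=
  A = A.submatrix id C * (A.submatrix R C)⁻¹ * A.submatrix R id

theorem Matrix.exists_isUnit_submatrix_isCUR [Fintype m] [Fintype n] {K : Type*} [Field K]
    {A : Matrix m n K} (hA : A.rank = r) :
    ∃ (R : Fin r → m) (C : Fin r → n), IsUnit (A.submatrix R C) ∧ A.IsCUR R C := by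
  obtain ⟨R, hRspan, hRli⟩ :=
    exists_fin_linearIndependent_of_finrank_span_eq A.row (A.rank_eq_finrank_span_row ▸ hA)
  have hA' : (A.submatrix R id).rank = r :=
    (hRli.rank_matrix (M := A.submatrix R id)).trans (Fintype.card_fin r)
  obtain ⟨C, -, hCli⟩ := exists_fin_linearIndependent_of_finrank_span_eq (A.submatrix R id).col
    ((A.submatrix R id).rank_eq_finrank_span_cols ▸ hA')
  have hM : IsUnit (A.submatrix R C) := linearIndependent_cols_iff_isUnit.1 hCli
  obtain ⟨D, hD⟩ : ∃ D : Matrix m (Fin r) K, A = D * A.submatrix R id := by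
    have (i : m) : A.row i ∈ LinearMap.range (A.submatrix R id).vecMulLinear := by
      rw [range_vecMulLinear]
      exact hRspan ▸ subset_span ⟨i, rfl⟩
    choose D hD using this
    exact ⟨D, by ext i j; exact congrFun (hD i).symm j⟩
  have hC : A.submatrix id C = D * A.submatrix R C := by
    conv_lhs => rw [hD]
    ext i l
    simp [mul_apply]
  refine ⟨R, C, hM, ?_⟩
  rw [IsCUR, hC, mul_nonsing_inv_cancel_right _ _ ((isUnit_iff_isUnit_det _).1 hM), ← hD]

variable [Fintype m] [Fintype n] [DecidableEq m] [DecidableEq n]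

def crossIndices (R : Fin r → m) (C : Fin r → n) : Finset (m × n) :=
  ((Finset.univ.image R)ᶜ ×ˢ (Finset.univ.image C)ᶜ)ᶜ

theorem card_crossIndices_le (R : Fin r → m) (C : Fin r → n) :
    (crossIndices R C).card ≤
      Fintype.card m * Fintype.card n - (Fintype.card m - r) * (Fintype.card n - r) := by
  have hR : (Finset.univ.image R).card ≤ r := Finset.card_image_le.trans (by simp)
  have hC : (Finset.univ.image C).card ≤ r := Finset.card_image_le.trans (by simp)
  rw [crossIndices, Finset.card_compl, Finset.card_product, Finset.card_compl, Finset.card_compl,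
    Fintype.card_prod]
  gcongr

theorem Matrix.IsCUR.eq_of_eqOn_crossIndices {K : Type*} [CommRing K] {A A' : Matrix m n K}
    {R : Fin r → m} {C : Fin r → n} (hA : A.IsCUR R C) (hA' : A'.IsCUR R C)
    (h : ∀ q ∈ crossIndices R C, A q.1 q.2 = A' q.1 q.2) : A = A' := by
  have hrows : A.submatrix R id = A'.submatrix R id := by
    ext k j; exact h (R k, j) (by simp [crossIndices])
  have hcols : A.submatrix id C = A'.submatrix id C := by
    ext i l; exact h (i, C l) (by simp [crossIndices])
  have hcross : A.submatrix R C = A'.submatrix R C := by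
    ext k l; exact h (R k, C l) (by simp [crossIndices])
  rw [hA, hA', hrows, hcols, hcross]

theorem Matrix.ncard_setOf_abs_le_isCUR_le {p N : ℕ} (hNp : N < p) (R : Fin r → m)
    (C : Fin r → n) :
    {B : Matrix m n ℤ | (∀ i j, |B i j| ≤ N) ∧ (B.map (Int.cast : ℤ → ZMod p)).IsCUR R C}.ncard ≤
      (2 * N + 1) ^ (crossIndices R C).card * 2 ^ (Fintype.card m * Fintype.card n) := by
  set T := {B : Matrix m n ℤ | (∀ i j, |B i j| ≤ N) ∧ (B.map (Int.cast : ℤ → ZMod p)).IsCUR R C}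
  -- The signs are needed because `2 * N + 1` may exceed `p`.
  let f : T → (crossIndices R C → Finset.Icc (-(N : ℤ)) N) × (m → n → Bool) := fun B =>
    (fun q => ⟨B.1 q.1.1 q.1.2, Finset.mem_Icc.2 (abs_le.1 (B.2.1 _ _))⟩,
      fun i j => decide (0 ≤ B.1 i j))
  have hf : Function.Injective f := by
    rintro ⟨B, hB, hBcur⟩ ⟨B', hB', hB'cur⟩ hBB'
    obtain ⟨hcross, hsign⟩ := Prod.ext_iff.1 hBB'
    have hmod : B.map (Int.cast : ℤ → ZMod p) = B'.map Int.cast :=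
      hBcur.eq_of_eqOn_crossIndices hB'cur fun q hq => by
        simpa [f] using congrArg (fun g => ((g ⟨q, hq⟩ : ℤ) : ZMod p)) hcross
    refine Subtype.ext (Matrix.ext fun i j => Int.eq_of_intCast_eq_of_abs_le hNp (hB i j)
      (hB' i j) (congrFun₂ hmod i j) ?_)
    simpa [f] using congrFun₂ hsign i j
  calc T.ncard = Nat.card T := (Nat.card_coe_set_eq T).symm
    _ ≤ _ := Nat.card_le_card_of_injective f hf
    _ = _ := by
      simp only [Nat.card_eq_fintype_card, Fintype.card_prod, Fintype.card_fun, Fintype.card_coe,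
        Int.card_Icc, Fintype.card_bool]
      rw [← pow_mul, mul_comm (Fintype.card n), show ((N : ℤ) + 1 - -N).toNat = 2 * N + 1 by omega]

theorem Matrix.card_setOf_abs_le_rank_eq_le {p : ℕ} [Fact p.Prime] {N : ℕ} (hNp : N < p) :
    Nat.card {B : Matrix m n ℤ |
        (∀ i j, |B i j| ≤ N) ∧ (B.map (Int.cast : ℤ → ZMod p)).rank = r} ≤
      Fintype.card m ^ r * Fintype.card n ^ r *
        (2 * N + 1) ^ (Fintype.card m * Fintype.card n -
          (Fintype.card m - r) * (Fintype.card n - r)) *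
        2 ^ (Fintype.card m * Fintype.card n) := by
  set T : (Fin r → m) × (Fin r → n) → Set (Matrix m n ℤ) := fun RC =>
    {B | (∀ i j, |B i j| ≤ N) ∧ (B.map (Int.cast : ℤ → ZMod p)).IsCUR RC.1 RC.2}
  have hcover : {B : Matrix m n ℤ |
      (∀ i j, |B i j| ≤ N) ∧ (B.map (Int.cast : ℤ → ZMod p)).rank = r} ⊆
        ⋃ RC ∈ Finset.univ, T RC := by
    rintro B ⟨hB, hrank⟩
    obtain ⟨R, C, -, hcur⟩ := exists_isUnit_submatrix_isCUR hrank
    exact Set.mem_biUnion (Finset.mem_coe.2 (Finset.mem_univ (R, C))) ⟨hB, hcur⟩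
  have hfin : (⋃ RC ∈ Finset.univ, T RC).Finite :=
    (finite_setOf_abs_le N).subset (Set.iUnion₂_subset fun _ _ _ hB => hB.1)
  rw [Nat.card_coe_set_eq]
  calc _ ≤ (⋃ RC ∈ Finset.univ, T RC).ncard := Set.ncard_le_ncard hcover hfin
    _ ≤ ∑ RC, (T RC).ncard := Finset.set_ncard_biUnion_le _ _
    _ ≤ ∑ _RC : (Fin r → m) × (Fin r → n), (2 * N + 1) ^ (Fintype.card m * Fintype.card n -
          (Fintype.card m - r) * (Fintype.card n - r)) * 2 ^ (Fintype.card m * Fintype.card n) :=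
      Finset.sum_le_sum fun RC _ => (ncard_setOf_abs_le_isCUR_le hNp RC.1 RC.2).trans <| by
        gcongr
        · omega
        · exact card_crossIndices_le RC.1 RC.2
    _ = _ := by simp only [Finset.sum_const, Finset.card_univ, Fintype.card_prod, Fintype.card_fun,
          Fintype.card_fin, smul_eq_mul]; ring

end

theorem Nat.mul_self_sub_mul_self_sub_of_le {r n : ℕ} (hr : r ≤ n) :
    n * n - (n - r) * (n - r) = 2 * r * n - r * r := by
  obtain ⟨d, rfl⟩ := Nat.exists_eq_add_of_le hr
  rw [Nat.add_sub_cancel_left, show (r + d) * (r + d) = r * r + 2 * r * d + d * d by ring,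
    show 2 * r * (r + d) = r * r + 2 * r * d + r * r by ring, Nat.add_sub_cancel, Nat.add_sub_cancel]

theorem Nat.two_mul_add_one_pow_le {N e k : ℕ} (hN : 1 ≤ N) (he : e ≤ k) :
    (2 * N + 1) ^ e ≤ 3 ^ k * N ^ e :=
  calc (2 * N + 1) ^ e ≤ (3 * N) ^ e := by gcongr; omega
    _ ≤ 3 ^ k * N ^ e := by rw [mul_pow]; gcongr; omega

/-- The number of integer `n × n` matrices with all entries bounded in absolute value by
`N` whose reduction modulo a prime `p` (with `p > N`, as in the sieve setting where such
a matrix is determined by an invertible-mod-`p` `r × r` submatrix together with all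
entries in those `r` rows and `r` columns) has rank exactly `r` is `O_n(N^{2rn - r²})`. -/
theorem stmt15 (n : ℕ) : ∃ C : ℝ, 0 < C ∧
    ∀ (p : ℕ) [Fact p.Prime] (N : ℕ), 1 ≤ N → (N : ℕ) < p → ∀ r : ℕ,
      (Nat.card {B : Matrix (Fin n) (Fin n) ℤ |
          (∀ i j, |B i j| ≤ (N : ℤ)) ∧
          (B.map (Int.cast : ℤ → ZMod p)).rank = r} : ℝ) ≤
        C * (N : ℝ) ^ (2 * r * n - r * r) := by
  refine ⟨((n + 1) ^ (2 * n) * 6 ^ (n * n) : ℕ), by positivity, fun p _ N hN hNp r => ?_⟩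
  rcases le_or_gt r n with hr | hr
  · have hcount := card_setOf_abs_le_rank_eq_le (m := Fin n) (n := Fin n) (r := r) hNp
    rw [Fintype.card_fin, Nat.mul_self_sub_mul_self_sub_of_le hr] at hcount
    have he : 2 * r * n - r * r ≤ n * n :=
      Nat.mul_self_sub_mul_self_sub_of_le hr ▸ Nat.sub_le _ _
    set e := 2 * r * n - r * r
    have hbound : n ^ r * n ^ r * (2 * N + 1) ^ e * 2 ^ (n * n) ≤
        (n + 1) ^ (2 * n) * 6 ^ (n * n) * N ^ e :=
      calc _ ≤ (n + 1) ^ n * (n + 1) ^ n * (3 ^ (n * n) * N ^ e) * 2 ^ (n * n) := by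
            gcongr
            any_goals omega
            exact Nat.two_mul_add_one_pow_le hN he
        _ = (n + 1) ^ (2 * n) * 6 ^ (n * n) * N ^ e := by
            rw [show 6 = 3 * 2 by rfl, mul_pow]; ring
    exact_mod_cast hcount.trans hbound
  · have hempty : {B : Matrix (Fin n) (Fin n) ℤ |
        (∀ i j, |B i j| ≤ (N : ℤ)) ∧ (B.map (Int.cast : ℤ → ZMod p)).rank = r} = ∅ :=
      Set.eq_empty_of_forall_notMem fun B hB => hr.not_ge (hB.2 ▸ rank_le_height _)
    rw [hempty, Nat.card_of_isEmpty, Nat.cast_zero]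
    positivity
end
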